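/- For every p ∈ (0,1) and every a ∈ ℕ, one has f_p(a, 2) = a + 2 − 2/(1 − p) + p^a·(a + 2 + 2p/(1 − p)). -/
import Mathlib


namespace BallsBins

/-- `fp p a b` is the expected number of balls remaining in the two-bin removal process
started from the assignment `(a, b)`, in which at each round bin 1 is selected with
probability `p` and bin 2 with probability `1 - p`:
`fp p (a, 0) = a`, `fp p (0, b) = b`, and
`fp p (a, b) = p · fp p (a-1, b) + (1-p) · fp p (a, b-1)` for `a, b ≥ 1`. -/
noncomputable def fp (p : ℝ) : ℕ → ℕ → ℝ
  | a, 0 => a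
  | 0, b => b
  | a + 1, b + 1 => p * fp p a (b + 1) + (1 - p) * fp p (a + 1) b

lemma fp_one_formula (p : ℝ) (hp : (1 : ℝ) - p ≠ 0) (a : ℕ) :
    fp p a 1 = (a : ℝ) - p / (1 - p) + p ^ a / (1 - p) := by
  induction a with
  | zero =>
    simp only [fp]
    field_simp
    ring
  | succ n ih =>
    simp only [fp, ih]
    push_cast
    field_simp
    ring

/-- For every `p ∈ (0,1)` and every `a ∈ ℕ`,
`fp p (a, 2) = a + 2 - 2/(1-p) + p^a (a + 2 + 2p/(1-p))`. -/
theorem fp_two_formula (p : ℝ) (hp : p ∈ Set.Ioo (0 : ℝ) 1) (a : ℕ) :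
    fp p a 2 = (a : ℝ) + 2 - 2 / (1 - p) + p ^ a * ((a : ℝ) + 2 + 2 * p / (1 - p)) := by
  have hp1 : (1 : ℝ) - p ≠ 0 := (sub_pos.mpr hp.2).ne'
  induction a with
  | zero =>
    simp only [fp]
    field_simp
    ring
  | succ n ih =>
    simp only [fp] at ih ⊢
    rw [ih, fp_one_formula p hp1]
    push_cast
    field_simp
    ring
end BallsBins
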